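/- arXiv:1012.1785 — 2 statements merged into one kernel-verified Lean document; each statement's English description precedes it below -/
import Mathlib

section
/- Let Γ be a finitely generated group, φ : Γ → Γ an injective endomorphism, and H ≤ Γ a torsion-free subgroup of finite index. Then there exist integers m, n > 0 such that φ^m maps φ^{-n}(H) into φ^{-n}(H). -/
/-- A monoid is torsion-free if no element other than `1` has finite order
(the definition of `Monoid.IsTorsionFree` in Mathlib of December 2024, since removed). -/
def Monoid.IsTorsionFree (G : Type*) [Monoid G] : Prop :=
  ∀ g : G, g ≠ 1 → ¬IsOfFinOrder g

/-! The preimages `H_k = (φ ^ k)⁻¹ H` all have index at most `[Γ : H]`. A subgroup of index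
`n` is the stabilizer of a point under a homomorphism `Γ →* Equiv.Perm (Fin n)`, and such
homomorphisms are determined by the images of finitely many generators, so there are only
finitely many such subgroups. Hence `H_a = H_b` for some `a < b`, that is,
`H_a = (φ ^ (b - a))⁻¹ H_a`. -/

instance MonoidHom.finite_of_fg (G M : Type*) [Group G] [Group.FG G] [Monoid M] [Finite M] :
    Finite (G →* M) := by
  obtain ⟨S, hS, hSfin⟩ := Group.fg_iff.mp ‹Group.FG G›
  have : Finite S := hSfin
  refine Finite.of_injective (fun f : G →* M => fun s : S => f s) fun f g hfg => ?_
  exact MonoidHom.eq_of_eqOn_dense hS fun x hx => congrFun hfg ⟨x, hx⟩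

namespace Subgroup

variable {G : Type*} [Group G]

theorem exists_eq_comap_stabilizer_fin {K : Subgroup G} {n : ℕ} (hK : K.index = n)
    (hn : n ≠ 0) :
    ∃ (f : G →* Equiv.Perm (Fin n)) (i : Fin n),
      K = (MulAction.stabilizer (Equiv.Perm (Fin n)) i).comap f := by
  have : Fintype (G ⧸ K) := K.fintypeOfIndexNeZero (hK ▸ hn)
  let e : G ⧸ K ≃ Fin n :=
    Fintype.equivFinOfCardEq (by rw [← Nat.card_eq_fintype_card, ← index, hK])
  refine ⟨e.permCongrHom.toMonoidHom.comp (MulAction.toPermHom G (G ⧸ K)), e (1 : G), ?_⟩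
  ext g
  simp [Equiv.permCongrHom_coe, Equiv.permCongr_apply, QuotientGroup.eq]

theorem finite_setOf_index_eq [Group.FG G] {n : ℕ} (hn : n ≠ 0) :
    {K : Subgroup G | K.index = n}.Finite := by
  refine (Set.finite_range fun p : (G →* Equiv.Perm (Fin n)) × Fin n =>
    (MulAction.stabilizer (Equiv.Perm (Fin n)) p.2).comap p.1).subset fun K hK => ?_
  obtain ⟨f, i, rfl⟩ := exists_eq_comap_stabilizer_fin hK hn
  exact ⟨(f, i), rfl⟩

theorem finite_setOf_index_le [Group.FG G] (N : ℕ) :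
    {K : Subgroup G | K.index ≠ 0 ∧ K.index ≤ N}.Finite := by
  have hunion : {K : Subgroup G | K.index ≠ 0 ∧ K.index ≤ N} ⊆
      ⋃ n ∈ Finset.Icc 1 N, {K : Subgroup G | K.index = n} := fun K hK =>
    Set.mem_biUnion (Finset.mem_Icc.mpr ⟨Nat.one_le_iff_ne_zero.mpr hK.1, hK.2⟩) rfl
  refine Set.Finite.subset ((Finset.Icc 1 N).finite_toSet.biUnion fun n hn => ?_) hunion
  exact finite_setOf_index_eq (Nat.one_le_iff_ne_zero.mp (Finset.mem_Icc.mp hn).1)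

theorem index_comap_ne_zero {G' : Type*} [Group G'] (f : G' →* G) {H : Subgroup G}
    (hH : H.index ≠ 0) : (H.comap f).index ≠ 0 := fun h =>
  hH (index_eq_zero_of_relIndex_eq_zero (by rwa [index_comap] at h))

theorem index_comap_le {G' : Type*} [Group G'] (f : G' →* G) {H : Subgroup G}
    (hH : H.index ≠ 0) :
    (H.comap f).index ≤ H.index := by
  rw [index_comap, ← relIndex_top_right]
  exact relIndex_le_of_le_right le_top (by rwa [relIndex_top_right])

theorem comap_pow_add (φ : Monoid.End G) (H : Subgroup G) (n m : ℕ) :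
    H.comap (φ ^ (n + m)) = (H.comap (φ ^ n)).comap (φ ^ m) := by
  rw [pow_add]
  exact (comap_comap H (φ ^ n) (φ ^ m)).symm

end Subgroup

theorem exists_iterate_maps_preimage_into_itself_general (Γ : Type*) [Group Γ]
    [Group.FG Γ] (φ : Monoid.End Γ)
    (H : Subgroup Γ) (hH : H.FiniteIndex) :
    ∃ m n : ℕ, 0 < m ∧ 0 < n ∧
      Subgroup.map (φ ^ m : Monoid.End Γ) (Subgroup.comap (φ ^ n : Monoid.End Γ) H) ≤
        Subgroup.comap (φ ^ n : Monoid.End Γ) H := by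
  have hbounded (k : ℕ) :
      H.comap (φ ^ k) ∈ {K : Subgroup Γ | K.index ≠ 0 ∧ K.index ≤ H.index} :=
    ⟨Subgroup.index_comap_ne_zero _ hH.index_ne_zero,
      Subgroup.index_comap_le _ hH.index_ne_zero⟩
  obtain ⟨a, b, hab, heq⟩ := Set.Finite.exists_lt_map_eq_of_forall_mem
    (fun k => hbounded (k + 1)) (Subgroup.finite_setOf_index_le H.index)
  refine ⟨b - a, a + 1, by omega, a.succ_pos, Subgroup.map_le_iff_le_comap.mpr ?_⟩
  rw [← Subgroup.comap_pow_add, show a + 1 + (b - a) = b + 1 by omega]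
  exact heq.le

/-- Let `Γ` be a finitely generated group, `φ` an injective endomorphism of
`Γ`, and `H ≤ Γ` a torsion-free subgroup of finite index.  Then there exist
integers `m, n > 0` such that `φ^m` maps `φ^{-n}(H)` into `φ^{-n}(H)`. -/
theorem exists_iterate_maps_preimage_into_itself (Γ : Type*) [Group Γ]
    [Group.FG Γ] (φ : Monoid.End Γ) (hinj : Function.Injective φ)
    (H : Subgroup Γ) (hH : H.FiniteIndex) (htf : Monoid.IsTorsionFree H) :
    ∃ m n : ℕ, 0 < m ∧ 0 < n ∧
      Subgroup.map (φ ^ m : Monoid.End Γ) (Subgroup.comap (φ ^ n : Monoid.End Γ) H) ≤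
        Subgroup.comap (φ ^ n : Monoid.End Γ) H :=
  exists_iterate_maps_preimage_into_itself_general Γ φ H hH
end

section
/- For m, n ≥ 2 coprime, the torus knot group Γ_{m,n} = ⟨a, b ∣ aⁿ = bᵐ⟩ is not cofinitely Hopfian. -/
/-! With `z = aⁿ = bᵐ` central and `r = kmn + 1`, the endomorphism `a ↦ aʳ = z^{mk} a`,
`b ↦ bʳ = z^{nk} b` has an image `H` with `H ⊔ ⟨z⟩ = Γ` and `zʳ ∈ H`, so `H` is normal with
`Γ ⧸ H` cyclic of order dividing `r`. The endomorphism is not onto: composed with the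
homomorphism `Γ → ℤ`, `a ↦ m`, `b ↦ n`, which is onto because `gcd(m, n) = 1`, it becomes
multiplication by `r`. -/

/-- A group is *cofinitely Hopfian* if every endomorphism whose image has
finite index is an automorphism (i.e. is bijective). -/
def CofinitelyHopfian (Γ : Type*) [Group Γ] : Prop :=
  ∀ φ : Γ →* Γ, φ.range.FiniteIndex → Function.Bijective φ

/-- The single defining relation `aⁿ = bᵐ` of the torus knot group. -/
abbrev torusKnotRels (m n : ℕ) : Set (FreeGroup Bool) :=
  {FreeGroup.of true ^ n * (FreeGroup.of false ^ m)⁻¹}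

/-- The torus knot group `Γ_{m,n} = ⟨a, b ∣ aⁿ = bᵐ⟩`. -/
abbrev TorusKnotGroup (m n : ℕ) := PresentedGroup (torusKnotRels m n)

namespace Subgroup

variable {G : Type*} [Group G]

theorem normal_of_sup_eq_top_of_le_center {H K : Subgroup G} (hK : K ≤ center G)
    (hHK : H ⊔ K = ⊤) : H.Normal := by
  rw [← normalizer_eq_top_iff, eq_top_iff, ← hHK]
  exact sup_le le_normalizer (hK.trans (center_le_normalizer _))

theorem finiteIndex_of_sup_zpowers_eq_top {H : Subgroup G} [H.Normal] {z : G}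
    (hsup : H ⊔ zpowers z = ⊤) {r : ℕ} (hr : r ≠ 0) (hzr : z ^ r ∈ H) : H.FiniteIndex := by
  have hgen : zpowers (z : G ⧸ H) = ⊤ := by
    rw [← QuotientGroup.mk'_apply, ← MonoidHom.map_zpowers, ← bot_sup_eq (map _ _),
      ← QuotientGroup.map_mk'_self H, ← map_sup, hsup, ← MonoidHom.range_eq_map,
      QuotientGroup.range_mk']
  have hfin : IsOfFinOrder (z : G ⧸ H) :=
    isOfFinOrder_iff_pow_eq_one.2 ⟨r, hr.bot_lt, by
      rw [← QuotientGroup.mk_pow, QuotientGroup.eq_one_iff]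
      exact hzr⟩
  refine ⟨?_⟩
  rw [index, ← card_top, ← hgen, Nat.card_zpowers]
  exact hfin.orderOf_pos.ne'

end Subgroup

namespace TorusKnotGroup

open Subgroup

variable {m n : ℕ}

def a : TorusKnotGroup m n := PresentedGroup.of true

def b : TorusKnotGroup m n := PresentedGroup.of false

theorem a_pow_eq_b_pow : (a : TorusKnotGroup m n) ^ n = b ^ m := by
  rw [← mul_inv_eq_one]
  exact PresentedGroup.one_of_mem rfl

theorem eq_top_of_a_mem_of_b_mem {H : Subgroup (TorusKnotGroup m n)} (ha : a ∈ H) (hb : b ∈ H) :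
    H = ⊤ :=
  (eq_top_iff' H).2 (PresentedGroup.generated_by _ H (Bool.forall_bool.2 ⟨hb, ha⟩))

theorem a_pow_mem_center : (a : TorusKnotGroup m n) ^ n ∈ center (TorusKnotGroup m n) := by
  have hcentralizer : centralizer {a ^ n} = (⊤ : Subgroup (TorusKnotGroup m n)) := by
    refine eq_top_of_a_mem_of_b_mem ?_ ?_ <;> rw [mem_centralizer_singleton_iff]
    · exact ((Commute.refl a).pow_right n).eq
    · rw [a_pow_eq_b_pow]
      exact ((Commute.refl b).pow_right m).eq
  exact mem_center_iff.2 fun g => mem_centralizer_singleton_iff.1 (hcentralizer ▸ mem_top g)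

section lift

variable {G : Type*} [Group G]

def lift (x y : G) (h : x ^ n = y ^ m) : TorusKnotGroup m n →* G :=
  PresentedGroup.toGroup (f := fun i => bif i then x else y) (by
    rintro _ rfl
    simp [h])

@[simp]
theorem lift_a (x y : G) (h : x ^ n = y ^ m) : lift x y h a = x :=
  PresentedGroup.toGroup.of _

@[simp]
theorem lift_b (x y : G) (h : x ^ n = y ^ m) : lift x y h b = y :=
  PresentedGroup.toGroup.of _

theorem hom_ext {f g : TorusKnotGroup m n →* G} (ha : f a = g a) (hb : f b = g b) : f = g :=
  PresentedGroup.ext (Bool.forall_bool.2 ⟨hb, ha⟩)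

end lift

def powEndo (r : ℕ) : TorusKnotGroup m n →* TorusKnotGroup m n :=
  lift (a ^ r) (b ^ r) (by rw [pow_right_comm, a_pow_eq_b_pow, pow_right_comm])

@[simp]
theorem powEndo_a (r : ℕ) : powEndo r (a : TorusKnotGroup m n) = a ^ r :=
  lift_a _ _ _

@[simp]
theorem powEndo_b (r : ℕ) : powEndo r (b : TorusKnotGroup m n) = b ^ r :=
  lift_b _ _ _

def degree : TorusKnotGroup m n →* Multiplicative ℤ :=
  lift (.ofAdd m) (.ofAdd n) (by
    rw [← ofAdd_nsmul, ← ofAdd_nsmul, nsmul_eq_mul, nsmul_eq_mul, mul_comm])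

theorem degree_surjective (hco : m.Coprime n) :
    Function.Surjective (degree : TorusKnotGroup m n →* _) := by
  obtain ⟨u, v, huv⟩ : IsCoprime (m : ℤ) n := Nat.isCoprime_iff_coprime.2 hco
  intro x
  refine ⟨(a ^ u * b ^ v) ^ x.toAdd, ?_⟩
  rw [map_zpow, map_mul, map_zpow, map_zpow, degree, lift_a, lift_b, ← ofAdd_zsmul, ← ofAdd_zsmul,
    ← ofAdd_add, smul_eq_mul, smul_eq_mul, huv, ← ofAdd_zsmul, smul_eq_mul, mul_one, ofAdd_toAdd]

theorem degree_comp_powEndo (r : ℕ) :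
    degree.comp (powEndo r) = (powMonoidHom r).comp (degree : TorusKnotGroup m n →* _) :=
  hom_ext (by simp [degree]) (by simp [degree])

theorem powEndo_not_surjective (hco : m.Coprime n) {r : ℕ} (hr : r ≠ 1) :
    ¬ Function.Surjective (powEndo r : TorusKnotGroup m n →* _) := by
  intro h
  have hpow : Function.Surjective (powMonoidHom r : Multiplicative ℤ →* _) := by
    refine Function.Surjective.of_comp (g := degree (m := m) (n := n)) ?_
    rw [← MonoidHom.coe_comp, ← degree_comp_powEndo, MonoidHom.coe_comp]
    exact (degree_surjective hco).comp h
  obtain ⟨k, hk⟩ := hpow (.ofAdd 1)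
  have hrk : (r : ℤ) * k.toAdd = 1 := by simpa using congrArg Multiplicative.toAdd hk
  have := Int.eq_one_of_mul_eq_one_right (by positivity) hrk
  omega

theorem powEndo_range_finiteIndex (k : ℕ) :
    (powEndo (m * n * k + 1) : TorusKnotGroup m n →* _).range.FiniteIndex := by
  set r := m * n * k + 1
  set H := (powEndo r : TorusKnotGroup m n →* _).range
  set z : TorusKnotGroup m n := a ^ n with hz
  have ha : z ^ (m * k) * a = a ^ r := by
    rw [hz, ← pow_mul, ← pow_succ]
    congr 1
    ring
  have hb : z ^ (n * k) * b = b ^ r := by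
    rw [hz, a_pow_eq_b_pow, ← pow_mul, ← pow_succ]
    congr 1
    ring
  have hsup : H ⊔ zpowers z = ⊤ := by
    refine eq_top_of_a_mem_of_b_mem ?_ ?_
    · refine (mul_mem_cancel_left (mem_sup_right (pow_mem (mem_zpowers z) (m * k)))).1 ?_
      rw [ha]
      exact mem_sup_left ⟨a, powEndo_a r⟩
    · refine (mul_mem_cancel_left (mem_sup_right (pow_mem (mem_zpowers z) (n * k)))).1 ?_
      rw [hb]
      exact mem_sup_left ⟨b, powEndo_b r⟩
  have := normal_of_sup_eq_top_of_le_center (zpowers_le.2 a_pow_mem_center) hsup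
  exact finiteIndex_of_sup_zpowers_eq_top hsup (Nat.add_one_ne_zero _)
    ⟨a ^ n, by rw [map_pow, powEndo_a, pow_right_comm]⟩

end TorusKnotGroup

/-- For `m, n ≥ 2` coprime, the torus knot group `Γ_{m,n} = ⟨a, b ∣ aⁿ = bᵐ⟩`
is not cofinitely Hopfian. -/
theorem torusKnotGroup_not_cofinitelyHopfian (m n : ℕ) (hm : 2 ≤ m) (hn : 2 ≤ n)
    (hco : Nat.Coprime m n) :
    ¬ CofinitelyHopfian (TorusKnotGroup m n) := fun h =>
  TorusKnotGroup.powEndo_not_surjective hco (by nlinarith : 1 < _).ne'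
    (h _ (TorusKnotGroup.powEndo_range_finiteIndex 1)).2
end
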